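/- (Theorem 1: random subspaces are in general position.) Fix integers n ≥ 1, m ≥ 1, r ≥ 1 and dimensions d_1, …, d_r with 0 ≤ d_i ≤ n. There exists a constant C, depending only on these fixed parameters, such that for every prime power q and every family Π_1, …, Π_r of subspaces of F_q^n with dim(Π_i) = d_i, the following holds: if Π is the span of m vectors chosen independently and uniformly at random from F_q^n, then with probability at least 1 − C/q one has dim(Π) = min(m,n) and, for every i ∈ {1,…,r}, dim(Π_i ∩ Π) = max(d_i + min(m,n) − n, 0); i.e., Π is in general position with respect to the family {Π_i}. -/

import Mathlib

/-!
Choose the vectors one at a time. If, for a subspace `T`, every `v j` avoids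
`T + span (v 0, …, v (j-1))` whenever that space is proper, then each vector raises
`dim (T + span v)` by one until it reaches `n`, so `dim (T + span v) = min (dim T + m) n`.
Taking `T = 0` gives `dim Π`, and taking `T = Πᵢ` gives `dim (Πᵢ ∩ Π)` by the dimension
formula. Whatever the earlier vectors are, `v j` falls into a proper subspace with probability
at most `q^(n-1) / q^n = 1/q`, so a union bound over the `(r + 1) m` events gives `C = (r + 1) m`.
-/

open scoped Classical

open Module Finset Submodule

section PrefixSpan

variable (K : Type*) {V : Type*} [DivisionRing K] [AddCommGroup V] [Module K V] {m : ℕ}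

def prefixSpan (v : Fin m → V) (j : ℕ) : Submodule K V :=
  span K (v '' {k | (k : ℕ) < j})

variable {K}

@[simp]
theorem prefixSpan_zero (v : Fin m → V) : prefixSpan K v 0 = ⊥ := by
  simp [prefixSpan]

theorem prefixSpan_succ (v : Fin m → V) {j : ℕ} (hj : j < m) :
    prefixSpan K v (j + 1) = prefixSpan K v j ⊔ span K {v ⟨j, hj⟩} := by
  have hset : {k : Fin m | (k : ℕ) < j + 1}
      = ({k | (k : ℕ) < j} ∪ {⟨j, hj⟩} : Set (Fin m)) := by
    ext k
    simp only [Set.mem_ofPred_eq, Set.mem_union, Set.mem_singleton_iff, Fin.ext_iff]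
    omega
  rw [prefixSpan, prefixSpan, hset, Set.image_union, span_union, Set.image_singleton]

theorem prefixSpan_self (v : Fin m → V) : prefixSpan K v m = span K (Set.range v) := by
  have : {k : Fin m | (k : ℕ) < m} = Set.univ := Set.eq_univ_of_forall Fin.isLt
  rw [prefixSpan, this, Set.image_univ]

theorem prefixSpan_update_self (v : Fin m → V) (j : Fin m) (x : V) :
    prefixSpan K (Function.update v j x) j = prefixSpan K v j := by
  rw [prefixSpan, prefixSpan]
  congr 1
  exact Set.image_congr fun k hk => Function.update_of_ne (Fin.ne_of_lt hk) x v

def IsGenericOver (T : Submodule K V) (v : Fin m → V) : Prop :=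
  ∀ j : Fin m, T ⊔ prefixSpan K v j ≠ ⊤ → v j ∉ T ⊔ prefixSpan K v j

variable [FiniteDimensional K V]

theorem IsGenericOver.finrank_sup_prefixSpan {T : Submodule K V} {v : Fin m → V}
    (hv : IsGenericOver T v) :
    ∀ j ≤ m, finrank K ↥(T ⊔ prefixSpan K v j) = min (finrank K T + j) (finrank K V)
  | 0, _ => by
    rw [prefixSpan_zero, sup_bot_eq, add_zero]
    exact (min_eq_left T.finrank_le).symm
  | j + 1, hj => by
    have ih := hv.finrank_sup_prefixSpan j (by omega)
    rw [prefixSpan_succ v hj, ← sup_assoc]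
    by_cases htop : T ⊔ prefixSpan K v j = ⊤
    · rw [htop, finrank_top] at ih
      rw [htop, top_sup_eq, finrank_top]
      omega
    · have hlt := finrank_lt htop
      have hnew : v ⟨j, hj⟩ ∉ T ⊔ prefixSpan K v j := hv ⟨j, hj⟩ htop
      rw [finrank_sup_span_singleton hnew]
      omega

theorem IsGenericOver.finrank_sup_span_range {T : Submodule K V} {v : Fin m → V}
    (hv : IsGenericOver T v) :
    finrank K ↥(T ⊔ span K (Set.range v)) = min (finrank K T + m) (finrank K V) := by
  rw [← prefixSpan_self]
  exact hv.finrank_sup_prefixSpan m le_rfl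

theorem IsGenericOver.finrank_span_range {v : Fin m → V}
    (hv : IsGenericOver (⊥ : Submodule K V) v) :
    finrank K ↥(span K (Set.range v)) = min m (finrank K V) := by
  have := hv.finrank_sup_span_range
  rwa [bot_sup_eq, finrank_bot, zero_add] at this

theorem IsGenericOver.finrank_inf_span_range {S : Submodule K V} {v : Fin m → V}
    (hS : IsGenericOver S v) (hbot : IsGenericOver (⊥ : Submodule K V) v) :
    finrank K ↥(S ⊓ span K (Set.range v))
      = finrank K S + min m (finrank K V) - finrank K V := by
  have hsup := hS.finrank_sup_span_range
  have hspan := hbot.finrank_span_range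
  have := finrank_sup_add_finrank_inf_eq S (span K (Set.range v))
  omega

end PrefixSpan

theorem card_filter_apply_mem_mul_le {ι α : Type*} [Fintype ι] [DecidableEq ι] [Fintype α]
    (j : ι) (W : (ι → α) → Finset α) (hW : ∀ v x, W (Function.update v j x) = W v)
    {k : ℕ} (hk : ∀ v, #(W v) * k ≤ Fintype.card α) :
    #{v | v j ∈ W v} * k ≤ Fintype.card (ι → α) := by
  rcases isEmpty_or_nonempty α with hα | hα
  · have : IsEmpty (ι → α) := ⟨fun v => hα.false (v j)⟩
    simp
  have hinj : #{v | v j ∈ W v} * Fintype.card α ≤ ∑ u : ι → α, #(W u) := by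
    rw [← card_univ (α := α), ← card_product, ← card_sigma]
    refine card_le_card_of_injOn (fun p => ⟨Function.update p.1 j p.2, p.1 j⟩) ?_ ?_
    · rintro ⟨v, y⟩ hv
      simp_all
    · rintro ⟨v, y⟩ - ⟨v', y'⟩ - h
      simp only [Sigma.mk.injEq, heq_eq_eq] at h
      obtain ⟨hupd, hj⟩ := h
      have hy : y = y' := by simpa using congrFun hupd j
      subst hy
      have : v = v' := by
        ext i
        by_cases hi : i = j
        · subst hi; exact hj
        · simpa [Function.update_of_ne hi] using congrFun hupd i
      simp [this]
  have hsum : (∑ u : ι → α, #(W u)) * k ≤ Fintype.card (ι → α) * Fintype.card α := by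
    rw [sum_mul, ← smul_eq_mul, ← card_univ, ← sum_const]
    exact sum_le_sum fun u _ => hk u
  refine Nat.le_of_mul_le_mul_right ?_ (Fintype.card_pos (α := α))
  calc #{v | v j ∈ W v} * k * Fintype.card α
      = #{v | v j ∈ W v} * Fintype.card α * k := by ring
    _ ≤ _ := Nat.mul_le_mul_right k hinj
    _ ≤ _ := hsum

theorem card_mul_card_le_card_of_ne_top {K V : Type*} [DivisionRing K] [AddCommGroup V]
    [Module K V] [Fintype K] [Fintype V] {W : Submodule K V} (hW : W ≠ ⊤) :
    #{x | x ∈ W} * Fintype.card K ≤ Fintype.card V := by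
  have hlt := finrank_lt hW
  rw [← Fintype.card_subtype, Module.card_eq_pow_finrank (K := K) (V := W),
    Module.card_eq_pow_finrank (K := K) (V := V), ← pow_succ]
  exact Nat.pow_le_pow_right Fintype.card_pos hlt

section Counting

variable {K V : Type*} [DivisionRing K] [AddCommGroup V] [Module K V] [Fintype K] [Fintype V]
  {m : ℕ}

theorem card_filter_mem_prefixSpan_mul_le (T : Submodule K V) (j : Fin m) :
    #{v : Fin m → V | T ⊔ prefixSpan K v j ≠ ⊤ ∧ v j ∈ T ⊔ prefixSpan K v j}
      * Fintype.card K ≤ Fintype.card (Fin m → V) := by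
  have hW (u : Fin m → V) :
      #{x | T ⊔ prefixSpan K u j ≠ ⊤ ∧ x ∈ T ⊔ prefixSpan K u j} * Fintype.card K
        ≤ Fintype.card V := by
    by_cases htop : T ⊔ prefixSpan K u j = ⊤
    · simp [htop]
    · simpa [htop] using card_mul_card_le_card_of_ne_top htop
  simpa only [mem_filter, mem_univ, true_and] using card_filter_apply_mem_mul_le j _
    (fun v x => by rw [prefixSpan_update_self]) hW

theorem card_filter_exists_not_isGenericOver_mul_le {ι : Type*} [Fintype ι]
    (T : ι → Submodule K V) :
    #{v : Fin m → V | ∃ i, ¬IsGenericOver (T i) v} * Fintype.card K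
      ≤ Fintype.card ι * m * Fintype.card (Fin m → V) := by
  have hcover : ({v | ∃ i, ¬IsGenericOver (T i) v} : Finset (Fin m → V)) ⊆
      univ.biUnion fun p : ι × Fin m =>
        {v | T p.1 ⊔ prefixSpan K v p.2 ≠ ⊤ ∧ v p.2 ∈ T p.1 ⊔ prefixSpan K v p.2} := by
    intro v hv
    obtain ⟨i, hi⟩ := (mem_filter.mp hv).2
    simp only [IsGenericOver, not_forall, not_not, exists_prop] at hi
    obtain ⟨j, hj⟩ := hi
    exact mem_biUnion.mpr ⟨(i, j), mem_univ _, mem_filter.mpr ⟨mem_univ _, hj⟩⟩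
  calc _ ≤ (∑ p : ι × Fin m, #{v : Fin m → V | T p.1 ⊔ prefixSpan K v p.2 ≠ ⊤ ∧
          v p.2 ∈ T p.1 ⊔ prefixSpan K v p.2}) * Fintype.card K :=
        Nat.mul_le_mul_right _ ((card_le_card hcover).trans card_biUnion_le)
    _ ≤ ∑ _p : ι × Fin m, Fintype.card (Fin m → V) := by
        rw [sum_mul]
        exact sum_le_sum fun p _ => card_filter_mem_prefixSpan_mul_le (T p.1) p.2
    _ = _ := by simp

end Counting

theorem one_sub_div_le_card_div_of_compl_subset {α : Type*} [Fintype α] [Nonempty α]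
    {s t : Finset α} (hst : sᶜ ⊆ t) {k : ℕ} (hk : 0 < k) {C : ℝ}
    (ht : (#t * k : ℝ) ≤ C * Fintype.card α) :
    1 - C / k ≤ #s / Fintype.card α := by
  have hN : (0 : ℝ) < Fintype.card α := by exact_mod_cast Fintype.card_pos
  have hk' : (0 : ℝ) < k := by exact_mod_cast hk
  have hsplit : (#s + #sᶜ : ℝ) = Fintype.card α := by exact_mod_cast card_add_card_compl s
  have hcompl : (#sᶜ : ℝ) ≤ #t := by exact_mod_cast card_le_card hst
  have hbad : (#sᶜ : ℝ) ≤ C / k * Fintype.card α := by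
    rw [div_mul_eq_mul_div, le_div_iff₀ hk']
    exact (mul_le_mul_of_nonneg_right hcompl hk'.le).trans ht
  rw [le_div_iff₀ hN, sub_mul, one_mul]
  linarith

theorem stmt_6_general (n m r : ℕ) (d : Fin r → ℕ) :
    ∃ C : ℝ, ∀ (q : ℕ), IsPrimePow q →
      ∀ (F : Type) [Field F] [Fintype F], Fintype.card F = q →
      ∀ (S : Fin r → Submodule F (Fin n → F)),
        (∀ i, Module.finrank F ↥(S i) = d i) →
      1 - C / q ≤
        ((Finset.univ.filter (fun v : Fin m → (Fin n → F) =>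
            Module.finrank F ↥(Submodule.span F (Set.range v)) = min m n ∧
            ∀ i : Fin r,
              Module.finrank F ↥(S i ⊓ Submodule.span F (Set.range v))
                = d i + min m n - n)).card : ℝ)
          / (q : ℝ) ^ (m * n) := by
  refine ⟨(r + 1) * m, fun q _ F _ _ hq S hS => ?_⟩
  subst hq
  let T : Option (Fin r) → Submodule F (Fin n → F) := fun o => o.elim ⊥ S
  have hbad := card_filter_exists_not_isGenericOver_mul_le (m := m) T
  rw [Fintype.card_option, Fintype.card_fin] at hbad
  have hcard : (Fintype.card F : ℝ) ^ (m * n) = Fintype.card (Fin m → Fin n → F) := by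
    simp only [Fintype.card_fun, Fintype.card_fin]
    push_cast
    ring
  rw [hcard]
  refine one_sub_div_le_card_div_of_compl_subset (fun v hv => ?_) Fintype.card_pos
    (by exact_mod_cast hbad)
  simp only [mem_compl, mem_filter, mem_univ, true_and] at hv ⊢
  contrapose! hv
  have hbot : IsGenericOver (⊥ : Submodule F (Fin n → F)) v := hv none
  have hspan := hbot.finrank_span_range
  rw [Module.finrank_fin_fun] at hspan
  refine ⟨hspan, fun i => ?_⟩
  have hSi : IsGenericOver (S i) v := hv (some i)
  rw [hSi.finrank_inf_span_range hbot, hS i, Module.finrank_fin_fun]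

/-- Theorem 1: random subspaces are in general position: for fixed
`n, m, r` and dimensions `d₁, …, d_r ≤ n` there is a constant `C` such that for every
prime power `q` and every family `S₁, …, S_r` of subspaces of `F_q^n` with
`dim Sᵢ = dᵢ`, the span `S` of `m` uniformly random vectors of `F_q^n` satisfies, with
probability at least `1 − C/q`: `dim S = min(m,n)` and
`dim (Sᵢ ∩ S) = max(dᵢ + min(m,n) − n, 0)` for every `i`. -/
theorem stmt_6 (n m r : ℕ) (hn : 1 ≤ n) (hm : 1 ≤ m) (hr : 1 ≤ r)
    (d : Fin r → ℕ) (hd : ∀ i, d i ≤ n) :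
    ∃ C : ℝ, ∀ (q : ℕ), IsPrimePow q →
      ∀ (F : Type) [Field F] [Fintype F], Fintype.card F = q →
      ∀ (S : Fin r → Submodule F (Fin n → F)),
        (∀ i, Module.finrank F ↥(S i) = d i) →
      1 - C / q ≤
        ((Finset.univ.filter (fun v : Fin m → (Fin n → F) =>
            Module.finrank F ↥(Submodule.span F (Set.range v)) = min m n ∧
            ∀ i : Fin r,
              Module.finrank F ↥(S i ⊓ Submodule.span F (Set.range v))
                = d i + min m n - n)).card : ℝ)
          / (q : ℝ) ^ (m * n) :=
  stmt_6_general n m r d
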